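/- arXiv:2002.07018 — 3 statements merged into one kernel-verified Lean document; each statement's English description precedes it below -/
import Mathlib

section
/- Let A and M be symmetric positive definite real 3×3 matrices that commute (AM = MA). Then for every real orthogonal 3×3 matrix Q one has ‖A − M‖_F ≤ ‖A − QM‖_F, where ‖·‖_F is the Frobenius norm. -/
/-!
Expanding the Frobenius norm, `‖A - Q M‖² - ‖A - M‖² = 2 (tr (M A) - tr (Q M A))` for orthogonal
`Q`. Since `A` and `M` are commuting positive semidefinite matrices, `M A` is positive semidefinite,
hence `M A = Bᵀ B`; expanding `‖Bᵀ - Q Bᵀ‖² ≥ 0` with `‖Q Bᵀ‖ = ‖Bᵀ‖` gives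
`tr (Q Bᵀ B) ≤ ‖Bᵀ‖² = tr (M A)`.
-/

open Matrix

attribute [local instance] Matrix.frobeniusNormedAddCommGroup

namespace Matrix

variable {m n : Type*} [Fintype m] [Fintype n]

open scoped MatrixOrder ComplexOrder in
theorem PosSemidef.mul_of_commute {𝕜 : Type*} [RCLike 𝕜] [DecidableEq n]
    {A B : Matrix n n 𝕜} (hA : A.PosSemidef) (hB : B.PosSemidef) (h : Commute A B) :
    (A * B).PosSemidef :=
  (h.mul_nonneg hA.nonneg hB.nonneg).posSemidef

open scoped MatrixOrder in
theorem PosSemidef.exists_eq_transpose_mul_self [DecidableEq n] {S : Matrix n n ℝ}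
    (hS : S.PosSemidef) : ∃ B : Matrix n n ℝ, S = Bᵀ * B :=
  CStarAlgebra.nonneg_iff_eq_star_mul_self.mp hS.nonneg

theorem frobenius_norm_sq_eq_trace (X : Matrix m n ℝ) : ‖X‖ ^ 2 = trace (Xᵀ * X) := by
  rw [frobenius_norm_def, ← Real.sqrt_eq_rpow, Real.sq_sqrt (by positivity), trace,
    Finset.sum_comm]
  simp [mul_apply, sq]

theorem frobenius_norm_sub_sq (X Y : Matrix m n ℝ) :
    ‖X - Y‖ ^ 2 = ‖X‖ ^ 2 + ‖Y‖ ^ 2 - 2 * trace (Xᵀ * Y) := by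
  have hYX : trace (Yᵀ * X) = trace (Xᵀ * Y) := by
    rw [← trace_transpose, transpose_mul, transpose_transpose]
  simp only [frobenius_norm_sq_eq_trace, transpose_sub, Matrix.sub_mul, Matrix.mul_sub, trace_sub,
    hYX]
  ring

theorem frobenius_norm_orthogonal_mul [DecidableEq m] {Q : Matrix m m ℝ} (hQ : Qᵀ * Q = 1)
    (X : Matrix m n ℝ) : ‖Q * X‖ = ‖X‖ := by
  rw [← sq_eq_sq₀ (norm_nonneg _) (norm_nonneg _), frobenius_norm_sq_eq_trace,
    frobenius_norm_sq_eq_trace, transpose_mul, Matrix.mul_assoc, ← Matrix.mul_assoc Qᵀ, hQ,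
    Matrix.one_mul]

theorem trace_orthogonal_mul_le_of_posSemidef [DecidableEq n] {Q S : Matrix n n ℝ}
    (hQ : Qᵀ * Q = 1) (hS : S.PosSemidef) : trace (Q * S) ≤ trace S := by
  obtain ⟨B, rfl⟩ := hS.exists_eq_transpose_mul_self
  have h := frobenius_norm_sub_sq Bᵀ (Q * Bᵀ)
  have hnorm : ‖Bᵀ‖ ^ 2 = trace (Bᵀ * B) := by
    rw [frobenius_norm_sq_eq_trace, transpose_transpose, trace_mul_comm]
  have hcross : trace (Bᵀᵀ * (Q * Bᵀ)) = trace (Q * (Bᵀ * B)) := by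
    rw [transpose_transpose, trace_mul_comm, Matrix.mul_assoc]
  rw [frobenius_norm_orthogonal_mul hQ, hnorm, hcross] at h
  linarith [sq_nonneg ‖Bᵀ - Q * Bᵀ‖]

theorem frobenius_norm_sub_le_norm_sub_orthogonal_mul [DecidableEq n] {A M Q : Matrix n n ℝ}
    (hA : Aᵀ = A) (hMA : (M * A).PosSemidef) (hQ : Qᵀ * Q = 1) :
    ‖A - M‖ ≤ ‖A - Q * M‖ := by
  have htrace : trace (Aᵀ * (Q * M)) ≤ trace (Aᵀ * M) := by
    rw [hA, trace_mul_comm, Matrix.mul_assoc, trace_mul_comm A]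
    exact trace_orthogonal_mul_le_of_posSemidef hQ hMA
  have hsq : ‖A - M‖ ^ 2 ≤ ‖A - Q * M‖ ^ 2 := by
    rw [frobenius_norm_sub_sq, frobenius_norm_sub_sq, frobenius_norm_orthogonal_mul hQ]
    linarith
  exact (pow_le_pow_iff_left₀ (norm_nonneg _) (norm_nonneg _) two_ne_zero).mp hsq

end Matrix

/-- **Lemma 14 of the paper.** If `A` and `M` are commuting symmetric positive definite
real `3×3` matrices and `Q` is orthogonal, then `‖A − M‖_F ≤ ‖A − Q·M‖_F`
(Frobenius norm). -/
theorem stmt1 (A M Q : Matrix (Fin 3) (Fin 3) ℝ)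
    (hA : A.PosDef) (hM : M.PosDef) (hcomm : A * M = M * A)
    (hQ : Qᵀ * Q = 1) :
    ‖A - M‖ ≤ ‖A - Q * M‖ :=
  frobenius_norm_sub_le_norm_sub_orthogonal_mul hA.isHermitian
    (hM.posSemidef.mul_of_commute hA.posSemidef hcomm.symm) hQ
end

section
/- Let (X, μ) be a measure space, let h > 0 and C₁, C₂ > 0, and let f, g ∈ L²(μ; M_{3×3}(ℝ)) satisfy ∫ ‖f − g‖_F² dμ ≤ C₁ h³ and ∫ ‖f‖_F² dμ + ∫ ‖g‖_F² dμ ≤ C₂ h. Then ∫ ‖fᵀf − gᵀg‖_F dμ ≤ √(2 C₁ C₂) · h². -/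
/-!
Writing `fᵀf - gᵀg = fᵀ(f - g) + (f - g)ᵀg` and using submultiplicativity of the Frobenius norm
gives the pointwise bound `‖fᵀf - gᵀg‖ ≤ ‖f - g‖ (‖f‖ + ‖g‖)`. Cauchy–Schwarz then bounds the
integral by `(∫ ‖f - g‖²)^{1/2} (2 ∫ (‖f‖² + ‖g‖²))^{1/2} ≤ (C₁ h³ · 2 C₂ h)^{1/2}`.
-/

open MeasureTheory Matrix

attribute [local instance] Matrix.frobeniusNormedAddCommGroup

namespace Matrix

variable {𝕜 m n : Type*} [RCLike 𝕜] [Fintype m] [Fintype n]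

theorem frobenius_norm_transpose_mul_self_sub_le (A B : Matrix m n 𝕜) :
    ‖Aᵀ * A - Bᵀ * B‖ ≤ ‖A - B‖ * (‖A‖ + ‖B‖) := by
  have hsplit : Aᵀ * A - Bᵀ * B = Aᵀ * (A - B) + (A - B)ᵀ * B := by
    rw [transpose_sub, Matrix.mul_sub, Matrix.sub_mul]; abel
  calc ‖Aᵀ * A - Bᵀ * B‖ ≤ ‖Aᵀ * (A - B)‖ + ‖(A - B)ᵀ * B‖ := hsplit ▸ norm_add_le _ _
    _ ≤ ‖Aᵀ‖ * ‖A - B‖ + ‖(A - B)ᵀ‖ * ‖B‖ :=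
      add_le_add (frobenius_norm_mul _ _) (frobenius_norm_mul _ _)
    _ = ‖A - B‖ * (‖A‖ + ‖B‖) := by
      rw [frobenius_norm_transpose, frobenius_norm_transpose]; ring

end Matrix

namespace MeasureTheory

variable {X : Type*} [MeasurableSpace X] {μ : Measure X}

theorem integral_norm_mul_norm_le_sqrt_mul_sqrt {E F : Type*} [NormedAddCommGroup E]
    [NormedAddCommGroup F] {u : X → E} {v : X → F} (hu : MemLp u 2 μ) (hv : MemLp v 2 μ) :
    ∫ x, ‖u x‖ * ‖v x‖ ∂μ ≤ √(∫ x, ‖u x‖ ^ 2 ∂μ) * √(∫ x, ‖v x‖ ^ 2 ∂μ) := by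
  have hp : ENNReal.ofReal 2 = 2 := by norm_num
  have h := integral_mul_norm_le_Lp_mul_Lq (μ := μ) Real.HolderConjugate.two_two
    (hp ▸ hu.norm) (hp ▸ hv.norm)
  simpa only [norm_norm, Real.sqrt_eq_rpow, Real.rpow_two] using h

theorem integral_norm_transpose_mul_self_sub_le {m n 𝕜 : Type*} [RCLike 𝕜]
    [Fintype m] [Fintype n] {f g : X → Matrix m n 𝕜} (hf : MemLp f 2 μ) (hg : MemLp g 2 μ) :
    ∫ x, ‖(f x)ᵀ * f x - (g x)ᵀ * g x‖ ∂μ ≤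
      √(∫ x, ‖f x - g x‖ ^ 2 ∂μ) * √(2 * ((∫ x, ‖f x‖ ^ 2 ∂μ) + ∫ x, ‖g x‖ ^ 2 ∂μ)) := by
  have hsum : MemLp (fun x => ‖f x‖ + ‖g x‖) 2 μ := hf.norm.add hg.norm
  have hnorm_sum : ∀ x, ‖‖f x‖ + ‖g x‖‖ = ‖f x‖ + ‖g x‖ := fun x =>
    Real.norm_of_nonneg (by positivity)
  have hprod : Integrable (fun x => ‖f x - g x‖ * (‖f x‖ + ‖g x‖)) μ :=
    (hf.sub hg).norm.integrable_mul hsum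
  have hsq : ∫ x, (‖f x‖ + ‖g x‖) ^ 2 ∂μ ≤ 2 * ((∫ x, ‖f x‖ ^ 2 ∂μ) + ∫ x, ‖g x‖ ^ 2 ∂μ) := by
    rw [← integral_add hf.norm.integrable_sq hg.norm.integrable_sq, ← integral_const_mul]
    exact integral_mono hsum.integrable_sq
      ((hf.norm.integrable_sq.add hg.norm.integrable_sq).const_mul 2) fun x => add_sq_le
  calc ∫ x, ‖(f x)ᵀ * f x - (g x)ᵀ * g x‖ ∂μ
      ≤ ∫ x, ‖f x - g x‖ * ‖‖f x‖ + ‖g x‖‖ ∂μ := by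
        simp only [hnorm_sum]
        exact integral_mono_of_nonneg (.of_forall fun x => norm_nonneg _) hprod
          (.of_forall fun x => frobenius_norm_transpose_mul_self_sub_le _ _)
    _ ≤ √(∫ x, ‖f x - g x‖ ^ 2 ∂μ) * √(∫ x, ‖‖f x‖ + ‖g x‖‖ ^ 2 ∂μ) :=
        integral_norm_mul_norm_le_sqrt_mul_sqrt (u := fun x => f x - g x) (hf.sub hg) hsum
    _ ≤ _ := by
        simp only [hnorm_sum]
        gcongr

end MeasureTheory

theorem stmt2_general {X : Type*} [MeasurableSpace X] (μ : Measure X)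
    (h C₁ C₂ : ℝ)
    (f g : X → Matrix (Fin 3) (Fin 3) ℝ)
    (hf : MemLp f 2 μ) (hg : MemLp g 2 μ)
    (hfg : ∫ x, ‖f x - g x‖ ^ 2 ∂μ ≤ C₁ * h ^ 3)
    (hbd : (∫ x, ‖f x‖ ^ 2 ∂μ) + ∫ x, ‖g x‖ ^ 2 ∂μ ≤ C₂ * h) :
    ∫ x, ‖(f x)ᵀ * f x - (g x)ᵀ * g x‖ ∂μ ≤ Real.sqrt (2 * C₁ * C₂) * h ^ 2 := by
  have hdiff_nonneg : 0 ≤ ∫ x, ‖f x - g x‖ ^ 2 ∂μ := integral_nonneg fun x => by positivity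
  calc ∫ x, ‖(f x)ᵀ * f x - (g x)ᵀ * g x‖ ∂μ
      ≤ √(∫ x, ‖f x - g x‖ ^ 2 ∂μ) * √(2 * ((∫ x, ‖f x‖ ^ 2 ∂μ) + ∫ x, ‖g x‖ ^ 2 ∂μ)) :=
        integral_norm_transpose_mul_self_sub_le hf hg
    _ ≤ √(C₁ * h ^ 3) * √(2 * (C₂ * h)) := by gcongr
    _ = √(2 * C₁ * C₂ * (h ^ 2) ^ 2) := by
        rw [← Real.sqrt_mul (hdiff_nonneg.trans hfg)]; ring_nf
    _ = √(2 * C₁ * C₂) * h ^ 2 := by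
        rw [Real.sqrt_mul' _ (by positivity), Real.sqrt_sq (by positivity)]

/-- **Quantitative footnote estimate of Proposition 17.** If `∫‖f−g‖² ≤ C₁h³` and
`∫‖f‖² + ∫‖g‖² ≤ C₂h`, then `∫‖fᵀf − gᵀg‖ ≤ √(2C₁C₂)·h²` (Frobenius norms,
pointwise matrix products). -/
theorem stmt2 {X : Type*} [MeasurableSpace X] (μ : Measure X)
    (h C₁ C₂ : ℝ) (hh : 0 < h) (hC₁ : 0 < C₁) (hC₂ : 0 < C₂)
    (f g : X → Matrix (Fin 3) (Fin 3) ℝ)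
    (hf : MemLp f 2 μ) (hg : MemLp g 2 μ)
    (hfg : ∫ x, ‖f x - g x‖ ^ 2 ∂μ ≤ C₁ * h ^ 3)
    (hbd : (∫ x, ‖f x‖ ^ 2 ∂μ) + ∫ x, ‖g x‖ ^ 2 ∂μ ≤ C₂ * h) :
    ∫ x, ‖(f x)ᵀ * f x - (g x)ᵀ * g x‖ ∂μ ≤ Real.sqrt (2 * C₁ * C₂) * h ^ 2 :=
  stmt2_general μ h C₁ C₂ f g hf hg hfg hbd
end

section
/- Fix λ > 0 and define u : ℝ³ → ℝ³ by u(x, y, z) = ((λ⁻¹ + z) cos(λx), (λ⁻¹ + z) sin(λx), y). Then u is smooth, and at every point p = (x, y, z) the Jacobian matrix Du(p) satisfies (Du(p))ᵀ Du(p) = A(p)², where A(p) = Id + λz·e₁⊗e₁ is the diagonal matrix diag(1 + λz, 1, 1). In particular, for every p with |z| < 1/λ, the matrix Du(p)·A(p)⁻¹ is orthogonal. -/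
open Matrix

/-- The explicit deformation of Example 1: `u(x,y,z) = ((λ⁻¹+z)cos(λx), (λ⁻¹+z)sin(λx), y)`. -/
noncomputable def uEx (l : ℝ) (p : Fin 3 → ℝ) : Fin 3 → ℝ :=
  ![(l⁻¹ + p 2) * Real.cos (l * p 0), (l⁻¹ + p 2) * Real.sin (l * p 0), p 1]

/-- The Jacobian matrix of `u : ℝ³ → ℝ³`, with columns the partial derivatives. -/
noncomputable def Du (u : (Fin 3 → ℝ) → Fin 3 → ℝ) (p : Fin 3 → ℝ) :
    Matrix (Fin 3) (Fin 3) ℝ :=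
  Matrix.of fun i j => fderiv ℝ u p (Pi.single j 1) i

/-- The prestrain matrix `A(p) = Id + λz·e₁⊗e₁`. -/
noncomputable def AEx (l : ℝ) (p : Fin 3 → ℝ) : Matrix (Fin 3) (Fin 3) ℝ :=
  1 + (l * p 2) • Matrix.single 0 0 1

noncomputable def LEx (l : ℝ) (p : Fin 3 → ℝ) : Fin 3 → (Fin 3 → ℝ) →L[ℝ] ℝ :=
  ![(l⁻¹ + p 2) • ((-Real.sin (l * p 0)) • (l • ContinuousLinearMap.proj (0 : Fin 3)))
      + Real.cos (l * p 0) • ContinuousLinearMap.proj (2 : Fin 3),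
    (l⁻¹ + p 2) • (Real.cos (l * p 0) • (l • ContinuousLinearMap.proj (0 : Fin 3)))
      + Real.sin (l * p 0) • ContinuousLinearMap.proj (2 : Fin 3),
    ContinuousLinearMap.proj (1 : Fin 3)]

lemma hasFDeriv_uEx (l : ℝ) (p : Fin 3 → ℝ) :
    HasFDerivAt (uEx l) (ContinuousLinearMap.pi (LEx l p)) p := by
  have hx : HasFDerivAt (𝕜 := ℝ) (fun q : Fin 3 → ℝ => l * q 0)
      (l • ContinuousLinearMap.proj (0 : Fin 3)) p := ((hasFDerivAt_apply (𝕜 := ℝ) (F' := fun _ : Fin 3 => ℝ) 0 p).const_mul l)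
  have hz : HasFDerivAt (𝕜 := ℝ) (fun q : Fin 3 → ℝ => l⁻¹ + q 2)
      (ContinuousLinearMap.proj (2 : Fin 3)) p := ((hasFDerivAt_apply (𝕜 := ℝ) (F' := fun _ : Fin 3 => ℝ) 2 p).const_add) l⁻¹
  have hcos : HasFDerivAt (𝕜 := ℝ) (fun q : Fin 3 → ℝ => Real.cos (l * q 0))
      ((-Real.sin (l * p 0)) • (l • ContinuousLinearMap.proj (0 : Fin 3))) p :=
    (Real.hasDerivAt_cos (l * p 0)).comp_hasFDerivAt (h₂ := Real.cos) p hx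
  have hsin : HasFDerivAt (𝕜 := ℝ) (fun q : Fin 3 → ℝ => Real.sin (l * q 0))
      (Real.cos (l * p 0) • (l • ContinuousLinearMap.proj (0 : Fin 3))) p :=
    (Real.hasDerivAt_sin (l * p 0)).comp_hasFDerivAt (h₂ := Real.sin) p hx
  have h := hasFDerivAt_pi (φ := ![fun q : Fin 3 → ℝ => (l⁻¹ + q 2) * Real.cos (l * q 0),
      fun q => (l⁻¹ + q 2) * Real.sin (l * q 0), fun q => q 1]) (φ' := LEx l p) (x := p)
  have h2 : HasFDerivAt (fun q i => ![fun q : Fin 3 → ℝ => (l⁻¹ + q 2) * Real.cos (l * q 0),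
      fun q => (l⁻¹ + q 2) * Real.sin (l * q 0), fun q => q 1] i q)
      (ContinuousLinearMap.pi (LEx l p)) p := by
    apply h.2
    intro i
    fin_cases i
    · exact hz.mul hcos
    · exact hz.mul hsin
    · exact hasFDerivAt_apply (𝕜 := ℝ) (F' := fun _ : Fin 3 => ℝ) 1 p
  convert h2 using 2 with q
  funext i
  fin_cases i <;> rfl
lemma Du_uEx (l : ℝ) (hl : l ≠ 0) (p : Fin 3 → ℝ) :
    Du (uEx l) p = !![-((1 + l * p 2) * Real.sin (l * p 0)), 0, Real.cos (l * p 0);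
      (1 + l * p 2) * Real.cos (l * p 0), 0, Real.sin (l * p 0);
      0, 1, 0] := by
  have h := (hasFDeriv_uEx l p).fderiv
  ext i j
  simp only [Du, Matrix.of_apply, h, ContinuousLinearMap.pi_apply]
  fin_cases i <;> fin_cases j <;>
    · simp [LEx, Pi.single_apply]
      try field_simp
      try ring

lemma AEx_diag (l : ℝ) (p : Fin 3 → ℝ) :
    AEx l p = Matrix.diagonal ![1 + l * p 2, 1, 1] := by
  ext i j
  fin_cases i <;> fin_cases j <;>
    simp [AEx, Matrix.single, Matrix.diagonal, Matrix.one_apply]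

/-- **Example 1 of the paper.** The deformation `uEx l` is smooth, its Jacobian satisfies
`(Du)ᵀDu = A²` with `A = Id + λz e₁⊗e₁ = diag(1+λz, 1, 1)`, and for `|z| < 1/λ` the
matrix `Du·A⁻¹` is orthogonal. -/
theorem stmt11 (l : ℝ) (hl : 0 < l) :
    ContDiff ℝ (⊤ : ℕ∞) (uEx l) ∧
    (∀ p : Fin 3 → ℝ, AEx l p = Matrix.diagonal ![1 + l * p 2, 1, 1]) ∧
    (∀ p : Fin 3 → ℝ, (Du (uEx l) p)ᵀ * Du (uEx l) p = AEx l p * AEx l p) ∧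
    (∀ p : Fin 3 → ℝ, |p 2| < 1 / l →
      (Du (uEx l) p * (AEx l p)⁻¹)ᵀ * (Du (uEx l) p * (AEx l p)⁻¹) = 1) := by
  have hl0 : l ≠ 0 := ne_of_gt hl
  have hsmooth : ContDiff ℝ (⊤ : ℕ∞) (uEx l) := by
    apply contDiff_pi.2
    intro i
    have : (fun p : Fin 3 → ℝ => uEx l p i) =
        ![fun p : Fin 3 → ℝ => (l⁻¹ + p 2) * Real.cos (l * p 0),
          fun p => (l⁻¹ + p 2) * Real.sin (l * p 0), fun p => p 1] i := by
      funext p; fin_cases i <;> rfl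
    rw [this]
    fin_cases i
    · exact ((contDiff_const.add (contDiff_apply ℝ ℝ 2)).mul
        (Real.contDiff_cos.comp (contDiff_const.mul (contDiff_apply ℝ ℝ 0))))
    · exact ((contDiff_const.add (contDiff_apply ℝ ℝ 2)).mul
        (Real.contDiff_sin.comp (contDiff_const.mul (contDiff_apply ℝ ℝ 0))))
    · exact contDiff_apply ℝ ℝ 1
  have hmain : ∀ p : Fin 3 → ℝ,
      (Du (uEx l) p)ᵀ * Du (uEx l) p = AEx l p * AEx l p := by
    intro p
    rw [Du_uEx l hl0 p, AEx_diag, Matrix.diagonal_mul_diagonal]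
    ext i j
    fin_cases i <;> fin_cases j <;>
      · simp [Matrix.mul_apply, Fin.sum_univ_three, Matrix.diagonal, Matrix.transpose_apply, Matrix.vecHead, Matrix.vecTail]
        try nlinarith [Real.sin_sq_add_cos_sq (l * p 0)]
  refine ⟨hsmooth, AEx_diag l, hmain, ?_⟩
  intro p hp
  have h1 : (1 : ℝ) + l * p 2 ≠ 0 := by
    have : |l * p 2| < 1 := by
      rw [abs_mul, abs_of_pos hl]
      calc l * |p 2| < l * (1 / l) := by
            exact mul_lt_mul_of_pos_left hp hl
        _ = 1 := by field_simp
    have := abs_lt.1 this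
    linarith [this.1]
  have hdet : (AEx l p).det ≠ 0 := by
    rw [AEx_diag, Matrix.det_diagonal]
    simp [Fin.prod_univ_three, h1]
  have hAt : (AEx l p)ᵀ = AEx l p := by
    rw [AEx_diag]; exact Matrix.diagonal_transpose _
  rw [Matrix.transpose_mul, Matrix.transpose_nonsing_inv, hAt]
  calc (AEx l p)⁻¹ * (Du (uEx l) p)ᵀ * (Du (uEx l) p * (AEx l p)⁻¹)
      = (AEx l p)⁻¹ * ((Du (uEx l) p)ᵀ * Du (uEx l) p) * (AEx l p)⁻¹ := by
        simp only [Matrix.mul_assoc]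
    _ = (AEx l p)⁻¹ * (AEx l p * AEx l p) * (AEx l p)⁻¹ := by rw [hmain p]
    _ = 1 := by
        rw [← Matrix.mul_assoc, Matrix.nonsing_inv_mul _ (isUnit_iff_ne_zero.mpr hdet), Matrix.one_mul,
          Matrix.mul_nonsing_inv _ (isUnit_iff_ne_zero.mpr hdet)]
end
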